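/- With the filters of the paper's example, the (1,1) entry of ∏_{j=1}^{3} H(x/2^j), namely t_{1,1}(x) = h_{1,1}(x/2)h_{1,1}(x/4)h_{1,1}(x/8) + h_{1,2}(x/2)h_{2,1}(x/4)h_{1,1}(x/8) + h_{1,1}(x/2)h_{1,2}(x/4)h_{2,1}(x/8), is supported in (8ℤ + ([-2/7,2/7] ∪ ±[3/7,4/7])) ∪ (4ℤ + ±[2/7, 4/7] shifted by 2, i.e. 4ℤ + 2 ± [1/7,2/7]) ∪ (8ℤ + 4 ± [3/7,4/7]). -/
import Mathlib


/-- The 1-periodization of a set `S ⊆ ℝ`. -/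
def per (S : Set ℝ) : Set ℝ := {x | ∃ k : ℤ, x + k ∈ S}

/-- `h_{1,1}(x) = p(x)` for `x ∈ [-2/7, 2/7)` mod 1 and `0` otherwise. -/
noncomputable def h11 (p : ℝ → ℝ) : ℝ → ℝ :=
  Set.indicator (per (Set.Ico (-2/7) (2/7))) p

/-- `h_{1,2}(x) = p(x + 1/2)` for `x ∈ [-1/7, 1/7)` mod 1 and `0` otherwise. -/
noncomputable def h12 (p : ℝ → ℝ) : ℝ → ℝ :=
  Set.indicator (per (Set.Ico (-1/7) (1/7))) (fun x => p (x + 1/2))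

/-- `h_{2,1}(x) = √2` for `x ∈ ±[3/7, 1/2)` mod 1 and `0` otherwise. -/
noncomputable def h21 : ℝ → ℝ :=
  Set.indicator (per (Set.Ico (3/7) (1/2) ∪ Set.Ico (-1/2) (-3/7))) (fun _ => Real.sqrt 2)

/-- The (1,1) entry of the triple product of filter matrices. -/
noncomputable def t11 (p : ℝ → ℝ) (x : ℝ) : ℝ :=
  h11 p (x/2) * h11 p (x/4) * h11 p (x/8) + h12 p (x/2) * h21 (x/4) * h11 p (x/8) +
    h11 p (x/2) * h12 p (x/4) * h21 (x/8)

lemma indicator_ne {S : Set ℝ} {f : ℝ → ℝ} {x : ℝ} (h : Set.indicator S f x ≠ 0) :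
    x ∈ S ∧ f x ≠ 0 := by
  by_cases hx : x ∈ S
  · exact ⟨hx, by rwa [Set.indicator_of_mem hx] at h⟩
  · exact absurd (Set.indicator_of_notMem hx f) h

set_option maxHeartbeats 1000000 in
/-- The (1,1) entry `t₁₁` of the triple product of filter
matrices is supported in
`(8ℤ + ([-2/7,2/7] ∪ ±[3/7,4/7])) ∪ (4ℤ + 2 ± [1/7,2/7]) ∪ (8ℤ + 4 ± [3/7,4/7])`. -/
theorem stmt12 (p : ℝ → ℝ)
    (hsm : ContDiff ℝ (⊤ : ℕ∞) p)
    (hper : ∀ x, p (x + 1) = p x)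
    (heven : ∀ x, p (-x) = p x)
    (hqmf : ∀ x, p x ^ 2 + p (x + 1/2) ^ 2 = 2)
    (hvan : ∀ x ∈ Set.Icc (1/7 : ℝ) (3/14) ∪ Set.Icc (3/7 : ℝ) (1/2), p x = 0) :
    ∀ x : ℝ, t11 p x ≠ 0 →
      (∃ k : ℤ, x - 8 * k ∈
          Set.Icc (-(2:ℝ)/7) (2/7) ∪ Set.Icc ((3:ℝ)/7) (4/7) ∪ Set.Icc (-(4:ℝ)/7) (-(3:ℝ)/7)) ∨
      (∃ k : ℤ, x - 4 * k ∈
          Set.Icc (2 + (1:ℝ)/7) (2 + 2/7) ∪ Set.Icc (2 - (2:ℝ)/7) (2 - 1/7)) ∨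
      (∃ k : ℤ, x - 8 * k ∈
          Set.Icc (4 + (3:ℝ)/7) (4 + 4/7) ∪ Set.Icc (4 - (4:ℝ)/7) (4 - 3/7)) := by
  intro x hx
  have hper1 : Function.Periodic p 1 := hper
  have pz : ∀ (k : ℤ) (y : ℝ), p (y + k) = p y := by
    intro k y
    simpa using (hper1.int_mul k) y
  have pv1 : ∀ y : ℝ, 1/7 ≤ y → y ≤ 3/14 → p y = 0 := fun y h1 h2 => hvan y (Or.inl ⟨h1, h2⟩)
  have pv1' : ∀ y : ℝ, -(3/14) ≤ y → y ≤ -(1/7) → p y = 0 := by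
    intro y h1 h2
    rw [← heven y]
    exact pv1 (-y) (by linarith) (by linarith)
  have pv2 : ∀ y : ℝ, -(1/14) ≤ y → y ≤ 1/14 → p (y + 1/2) = 0 := by
    intro y h1 h2
    rcases le_or_gt y 0 with h | h
    · exact hvan _ (Or.inr ⟨by linarith, by linarith⟩)
    · calc p (y + 1/2) = p (-(y + 1/2)) := (heven _).symm
        _ = p (-(y + 1/2) + 1) := (hper _).symm
        _ = 0 := by
            rw [show -(y + 1/2) + 1 = 1/2 - y by ring]
            exact hvan _ (Or.inr ⟨by linarith, by linarith⟩)
  have hsum : h11 p (x/2) * h11 p (x/4) * h11 p (x/8) ≠ 0 ∨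
      h12 p (x/2) * h21 (x/4) * h11 p (x/8) ≠ 0 ∨
      h11 p (x/2) * h12 p (x/4) * h21 (x/8) ≠ 0 := by
    by_contra hc
    push_neg at hc
    exact hx (by unfold t11; rw [hc.1, hc.2.1, hc.2.2]; ring)
  rcases hsum with h | h | h
  · -- Term 1
    have f1 := left_ne_zero_of_mul (left_ne_zero_of_mul h)
    have f2 := right_ne_zero_of_mul (left_ne_zero_of_mul h)
    have f3 := right_ne_zero_of_mul h
    unfold h11 at f1 f2 f3
    obtain ⟨⟨a, ha1, ha2⟩, hp1⟩ := indicator_ne f1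
    obtain ⟨⟨b, hb1, hb2⟩, -⟩ := indicator_ne f2
    obtain ⟨⟨c, hc1, hc2⟩, -⟩ := indicator_ne f3
    have hpu : p (x/2 + (a:ℝ)) ≠ 0 := by rw [pz a (x/2)]; exact hp1
    have hab : a = 2 * b := by
      have h1 : ((a - 2*b : ℤ) : ℝ) < 1 := by push_cast; linarith
      have h2 : (-1 : ℝ) < ((a - 2*b : ℤ) : ℝ) := by push_cast; linarith
      have h1' : a - 2*b < 1 := by exact_mod_cast h1
      have h2' : -1 < a - 2*b := by exact_mod_cast h2
      omega
    have hbc : b = 2 * c := by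
      have h1 : ((b - 2*c : ℤ) : ℝ) < 1 := by push_cast; linarith
      have h2 : (-1 : ℝ) < ((b - 2*c : ℤ) : ℝ) := by push_cast; linarith
      have h1' : b - 2*c < 1 := by exact_mod_cast h1
      have h2' : -1 < b - 2*c := by exact_mod_cast h2
      omega
    have hca : (a : ℝ) = 4 * c := by exact_mod_cast (by omega : a = 4 * c)
    refine Or.inl ⟨-c, ?_⟩
    have hE1 : 1/7 ≤ x/2 + (a:ℝ) → 3/14 < x/2 + (a:ℝ) := by
      intro hle
      by_contra hh; push_neg at hh
      exact hpu (pv1 _ hle hh)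
    have hE2 : x/2 + (a:ℝ) ≤ -(1/7) → x/2 + (a:ℝ) < -(3/14) := by
      intro hle
      by_contra hh; push_neg at hh
      exact hpu (pv1' _ hh hle)
    push_cast
    rcases le_or_gt (x/2 + (a:ℝ)) (-(1/7)) with hc1' | hc1'
    · have := hE2 hc1'
      exact Or.inr (Set.mem_Icc.mpr ⟨by linarith, by linarith⟩)
    · rcases lt_or_ge (x/2 + (a:ℝ)) (1/7) with hc2' | hc2'
      · exact Or.inl (Or.inl (Set.mem_Icc.mpr ⟨by linarith, by linarith⟩))
      · have := hE1 hc2'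
        exact Or.inl (Or.inr (Set.mem_Icc.mpr ⟨by linarith, by linarith⟩))
  · -- Term 2
    have f1 := left_ne_zero_of_mul (left_ne_zero_of_mul h)
    have f2 := right_ne_zero_of_mul (left_ne_zero_of_mul h)
    unfold h12 at f1
    unfold h21 at f2
    obtain ⟨⟨a, ha1, ha2⟩, hp1⟩ := indicator_ne f1
    obtain ⟨⟨b, hb⟩, -⟩ := indicator_ne f2
    have hpu : p ((x/2 + (a:ℝ)) + 1/2) ≠ 0 := by
      rw [show (x/2 + (a:ℝ)) + 1/2 = (x/2 + 1/2) + (a:ℝ) by ring, pz]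
      exact hp1
    have hE : x/2 + (a:ℝ) ≤ 1/14 → x/2 + (a:ℝ) < -(1/14) := by
      intro hle
      by_contra hh; push_neg at hh
      exact hpu (pv2 _ hh hle)
    rcases hb with ⟨hb1, hb2⟩ | ⟨hb1, hb2⟩
    · -- x/4 + b ∈ [3/7, 1/2): a = 2b - 1, take k = -b
      have hab : (a : ℝ) = 2 * b - 1 := by
        have h1 : ((a - 2*b : ℤ) : ℝ) < 0 := by push_cast; linarith
        have h2 : (-2 : ℝ) < ((a - 2*b : ℤ) : ℝ) := by push_cast; linarith
        have h1' : a - 2*b < 0 := by exact_mod_cast h1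
        have h2' : -2 < a - 2*b := by exact_mod_cast h2
        exact_mod_cast (by omega : a = 2 * b - 1)
      refine Or.inr (Or.inl ⟨-b, ?_⟩)
      push_cast
      rcases le_or_gt (x/2 + (a:ℝ)) 0 with hu | hu
      · have := hE (by linarith)
        exact Or.inr (Set.mem_Icc.mpr ⟨by linarith, by linarith⟩)
      · have h14 : ¬ x/2 + (a:ℝ) ≤ 1/14 := fun hh => by linarith [hE hh]
        push_neg at h14
        exact Or.inl (Set.mem_Icc.mpr ⟨by linarith, by linarith⟩)
    · -- x/4 + b ∈ [-1/2, -3/7): a = 2b + 1, take k = -b - 1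
      have hab : (a : ℝ) = 2 * b + 1 := by
        have h1 : ((a - 2*b : ℤ) : ℝ) < 2 := by push_cast; linarith
        have h2 : (0 : ℝ) < ((a - 2*b : ℤ) : ℝ) := by push_cast; linarith
        have h1' : a - 2*b < 2 := by exact_mod_cast h1
        have h2' : 0 < a - 2*b := by exact_mod_cast h2
        exact_mod_cast (by omega : a = 2 * b + 1)
      refine Or.inr (Or.inl ⟨-b - 1, ?_⟩)
      push_cast
      rcases le_or_gt (x/2 + (a:ℝ)) 0 with hu | hu
      · have := hE (by linarith)
        exact Or.inr (Set.mem_Icc.mpr ⟨by linarith, by linarith⟩)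
      · have h14 : ¬ x/2 + (a:ℝ) ≤ 1/14 := fun hh => by linarith [hE hh]
        push_neg at h14
        exact Or.inl (Set.mem_Icc.mpr ⟨by linarith, by linarith⟩)
  · -- Term 3
    have f1 := left_ne_zero_of_mul (left_ne_zero_of_mul h)
    have f2 := right_ne_zero_of_mul (left_ne_zero_of_mul h)
    have f3 := right_ne_zero_of_mul h
    unfold h11 at f1
    unfold h12 at f2
    unfold h21 at f3
    obtain ⟨⟨a, ha1, ha2⟩, hp1⟩ := indicator_ne f1
    obtain ⟨⟨b, hb1, hb2⟩, hp2⟩ := indicator_ne f2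
    obtain ⟨⟨c, hc⟩, -⟩ := indicator_ne f3
    have hpu : p (x/2 + (a:ℝ)) ≠ 0 := by rw [pz a (x/2)]; exact hp1
    have hpv : p ((x/4 + (b:ℝ)) + 1/2) ≠ 0 := by
      rw [show (x/4 + (b:ℝ)) + 1/2 = (x/4 + 1/2) + (b:ℝ) by ring, pz]
      exact hp2
    have hab : (a : ℝ) = 2 * b := by
      have h1 : ((a - 2*b : ℤ) : ℝ) < 1 := by push_cast; linarith
      have h2 : (-1 : ℝ) < ((a - 2*b : ℤ) : ℝ) := by push_cast; linarith
      have h1' : a - 2*b < 1 := by exact_mod_cast h1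
      have h2' : -1 < a - 2*b := by exact_mod_cast h2
      exact_mod_cast (by omega : a = 2 * b)
    have hEv : x/4 + (b:ℝ) ≤ 1/14 → x/4 + (b:ℝ) < -(1/14) := by
      intro hle
      by_contra hh; push_neg at hh
      exact hpv (pv2 _ hh hle)
    have hE1 : 1/7 ≤ x/2 + (a:ℝ) → 3/14 < x/2 + (a:ℝ) := by
      intro hle
      by_contra hh; push_neg at hh
      exact hpu (pv1 _ hle hh)
    have hE2 : x/2 + (a:ℝ) ≤ -(1/7) → x/2 + (a:ℝ) < -(3/14) := by
      intro hle
      by_contra hh; push_neg at hh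
      exact hpu (pv1' _ hh hle)
    rcases hc with ⟨hc1, hc2⟩ | ⟨hc1, hc2⟩
    · -- x/8 + c ∈ [3/7, 1/2): b = 2c - 1, take k = -c
      have hbc : (b : ℝ) = 2 * c - 1 := by
        have h1 : ((b - 2*c : ℤ) : ℝ) < 0 := by push_cast; linarith
        have h2 : (-2 : ℝ) < ((b - 2*c : ℤ) : ℝ) := by push_cast; linarith
        have h1' : b - 2*c < 0 := by exact_mod_cast h1
        have h2' : -2 < b - 2*c := by exact_mod_cast h2
        exact_mod_cast (by omega : b = 2 * c - 1)
      refine Or.inr (Or.inr ⟨-c, ?_⟩)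
      push_cast
      rcases le_or_gt (x/4 + (b:ℝ)) 0 with hu | hu
      · have h14 := hEv (by linarith)
        have := hE2 (by linarith)
        exact Or.inr (Set.mem_Icc.mpr ⟨by linarith, by linarith⟩)
      · have h14 : ¬ x/4 + (b:ℝ) ≤ 1/14 := fun hh => by linarith [hEv hh]
        push_neg at h14
        have := hE1 (by linarith)
        exact Or.inl (Set.mem_Icc.mpr ⟨by linarith, by linarith⟩)
    · -- x/8 + c ∈ [-1/2, -3/7): b = 2c + 1, take k = -c - 1
      have hbc : (b : ℝ) = 2 * c + 1 := by
        have h1 : ((b - 2*c : ℤ) : ℝ) < 2 := by push_cast; linarith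
        have h2 : (0 : ℝ) < ((b - 2*c : ℤ) : ℝ) := by push_cast; linarith
        have h1' : b - 2*c < 2 := by exact_mod_cast h1
        have h2' : 0 < b - 2*c := by exact_mod_cast h2
        exact_mod_cast (by omega : b = 2 * c + 1)
      refine Or.inr (Or.inr ⟨-c - 1, ?_⟩)
      push_cast
      rcases le_or_gt (x/4 + (b:ℝ)) 0 with hu | hu
      · have h14 := hEv (by linarith)
        have := hE2 (by linarith)
        exact Or.inr (Set.mem_Icc.mpr ⟨by linarith, by linarith⟩)
      · have h14 : ¬ x/4 + (b:ℝ) ≤ 1/14 := fun hh => by linarith [hEv hh]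
        push_neg at h14
        have := hE1 (by linarith)
        exact Or.inl (Set.mem_Icc.mpr ⟨by linarith, by linarith⟩)
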